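/- Let n ≥ 1. Inside the symmetric square SP²(ℂPⁿ) (the quotient of ℂPⁿ × ℂPⁿ by the coordinate-swapping involution), let C denote the subspace of unordered pairs {L, L′} of DISTINCT points of ℂPⁿ (the configuration space of unordered pairs of distinct points), and let Γₙ ⊆ C denote the subspace of unordered pairs {L, L′} of ORTHOGONAL lines, i.e. those with ⟨u, v⟩ = 0 for (any) nonzero representatives u of L and v of L′ in ℂ^{n+1}. Then the inclusion Γₙ ↪ C is a homotopy equivalence; indeed Γₙ is a deformation retract of C. -/

import Mathlib

open scoped unitInterval

/-- The unit vectors of `ℂ^{n+1}`. -/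
abbrev CSphere (n : ℕ) : Type :=
  Metric.sphere (0 : EuclideanSpace ℂ (Fin (n + 1))) 1

/-- Complex projective `n`-space, as the quotient of the unit sphere of `ℂ^{n+1}`
by the scalar action of the unit complex numbers, with the quotient topology. -/
abbrev CP (n : ℕ) : Type :=
  Quot (fun x y : CSphere n => ∃ a : ℂ, ‖a‖ = 1 ∧
    (y : EuclideanSpace ℂ (Fin (n + 1))) = a • (x : EuclideanSpace ℂ (Fin (n + 1))))

/-- The symmetric square `SP²(ℂPⁿ)`: the quotient of `ℂPⁿ × ℂPⁿ` by the
coordinate-swapping involution, with the quotient topology. -/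
abbrev SymSq (n : ℕ) : Type :=
  Quot (fun p q : CP n × CP n => q = (p.2, p.1))

/-- An unordered pair in `SP²(ℂPⁿ)` consists of two *distinct* points of `ℂPⁿ`. -/
def IsOffDiag {n : ℕ} (s : SymSq n) : Prop :=
  ∃ x y : CP n, x ≠ y ∧ s = Quot.mk _ (x, y)

/-- An unordered pair in `SP²(ℂPⁿ)` consists of two *orthogonal* lines of `ℂ^{n+1}`. -/
def IsOrthPair {n : ℕ} (s : SymSq n) : Prop :=
  ∃ u v : CSphere n,
    (inner ℂ (u : EuclideanSpace ℂ (Fin (n + 1))) (v : EuclideanSpace ℂ (Fin (n + 1))) : ℂ) = 0 ∧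
    s = Quot.mk _ (Quot.mk _ u, Quot.mk _ v)

/-- The configuration space `C` of unordered pairs of distinct points of `ℂPⁿ`,
as a subspace of `SP²(ℂPⁿ)`. -/
abbrev ConfigSpace (n : ℕ) : Type := {s : SymSq n // IsOffDiag s}

/-- The anti-diagonal `Γₙ ⊆ C` of unordered pairs of orthogonal lines. -/
abbrev AntiDiag (n : ℕ) : Type := {c : ConfigSpace n // IsOrthPair c.1}

namespace AntiDiagRetract

variable {n : ℕ}

noncomputable section

/-- The relation defining `CP`. -/
abbrev R1 (n : ℕ) : CSphere n → CSphere n → Prop :=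
  fun x y => ∃ a : ℂ, ‖a‖ = 1 ∧
    (y : EuclideanSpace ℂ (Fin (n + 1))) = a • (x : EuclideanSpace ℂ (Fin (n + 1)))

abbrev R2 (n : ℕ) : CP n × CP n → CP n × CP n → Prop := fun p q => q = (p.2, p.1)

lemma r1_equivalence : Equivalence (R1 n) := by
  constructor
  · intro x; exact ⟨1, by simp, by simp⟩
  · rintro x y ⟨a, ha, h⟩
    have ha0 : a ≠ 0 := by
      intro h0; rw [h0] at ha; simp at ha
    exact ⟨a⁻¹, by simp [map_inv₀, ha], by rw [h, smul_smul, inv_mul_cancel₀ ha0, one_smul]⟩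
  · rintro x y z ⟨a, ha, h⟩ ⟨b, hb, h'⟩
    exact ⟨b * a, by simp [map_mul, ha, hb], by rw [h', h, smul_smul]⟩

lemma cp_mk_eq_iff {x y : CSphere n} :
    (Quot.mk (R1 n) x = Quot.mk (R1 n) y) ↔ R1 n x y := by
  constructor
  · intro h
    exact (Equivalence.eqvGen_iff r1_equivalence).mp (Quot.eqvGen_exact h)
  · exact Quot.sound

lemma r2_eqvgen {p q : CP n × CP n} (h : Relation.EqvGen (R2 n) p q) :
    p = q ∨ q = (p.2, p.1) := by
  induction h with
  | rel a b hab => exact Or.inr hab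
  | refl a => exact Or.inl rfl
  | symm a b _ ih =>
    rcases ih with h | h
    · exact Or.inl h.symm
    · right; rw [h]
  | trans a b c _ _ ih1 ih2 =>
    rcases ih1 with h1 | h1 <;> rcases ih2 with h2 | h2 <;> subst_vars <;> simp
lemma sq_mk_eq_iff {p q : CP n × CP n} :
    (Quot.mk (R2 n) p = Quot.mk (R2 n) q) ↔ (p = q ∨ q = (p.2, p.1)) := by
  constructor
  · intro h; exact r2_eqvgen (Quot.eqvGen_exact h)
  · rintro (rfl | h)
    · rfl
    · exact Quot.sound h


lemma norm_val (u : CSphere n) : ‖(u : EuclideanSpace ℂ (Fin (n + 1)))‖ = 1 := by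
  have := u.2
  rwa [mem_sphere_zero_iff_norm] at this

lemma val_ne_zero (u : CSphere n) : (u : EuclideanSpace ℂ (Fin (n + 1))) ≠ 0 := by
  intro h
  have := norm_val u
  rw [h] at this
  simp at this

lemma inner_le_one (u v : CSphere n) :
    ‖(inner ℂ (u : EuclideanSpace ℂ (Fin (n + 1))) (v : EuclideanSpace ℂ (Fin (n + 1))) : ℂ)‖ ≤ 1 := by
  have := norm_inner_le_norm (𝕜 := ℂ) (u : EuclideanSpace ℂ (Fin (n + 1))) v
  rwa [norm_val, norm_val, one_mul] at this

lemma r1_iff_norm_inner (u v : CSphere n) :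
    R1 n u v ↔ ‖(inner ℂ (u : EuclideanSpace ℂ (Fin (n + 1))) (v : EuclideanSpace ℂ (Fin (n + 1))) : ℂ)‖ = 1 := by
  constructor
  · rintro ⟨a, ha, h⟩
    rw [h, inner_smul_right]
    have : (inner ℂ (u : EuclideanSpace ℂ (Fin (n + 1))) (u : EuclideanSpace ℂ (Fin (n + 1))) : ℂ) = 1 := by
      rw [inner_self_eq_norm_sq_to_K, norm_val]; norm_num
    rw [this, mul_one]
    exact ha
  · intro h
    have h' : ‖(inner ℂ (u : EuclideanSpace ℂ (Fin (n + 1))) (v : EuclideanSpace ℂ (Fin (n + 1))) : ℂ)‖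
        = ‖(u : EuclideanSpace ℂ (Fin (n + 1)))‖ * ‖(v : EuclideanSpace ℂ (Fin (n + 1)))‖ := by
      rw [norm_val, norm_val, one_mul]; exact h
    obtain ⟨r, hr0, hr⟩ := (norm_inner_eq_norm_iff (val_ne_zero u) (val_ne_zero v)).mp h'
    have hrn : ‖r‖ = 1 := by
      have := norm_val v
      rw [hr, norm_smul, norm_val, mul_one] at this
      exact this
    exact ⟨r, hrn, hr⟩

/-- scalar multiplication by a unit complex number on the sphere -/
def smulS (a : {a : ℂ // ‖a‖ = 1}) (x : CSphere n) : CSphere n :=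
  ⟨(a : ℂ) • (x : EuclideanSpace ℂ (Fin (n + 1))), by
    rw [mem_sphere_zero_iff_norm, norm_smul, norm_val, mul_one, a.2]⟩

lemma continuous_smulS (a : {a : ℂ // ‖a‖ = 1}) :
    Continuous (smulS (n := n) a) := by
  unfold smulS; exact ((continuous_const (y := (a : ℂ))).smul continuous_subtype_val).subtype_mk _

lemma isOpenMap_mk1 : IsOpenMap (Quot.mk (R1 n)) := by
  intro U hU
  rw [← (isQuotientMap_quot_mk (r := R1 n)).isOpen_preimage]
  have key : Quot.mk (R1 n) ⁻¹' (Quot.mk (R1 n) '' U)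
      = ⋃ a : {a : ℂ // ‖a‖ = 1}, smulS a ⁻¹' U := by
    ext x
    simp only [Set.mem_preimage, Set.mem_image, Set.mem_iUnion]
    constructor
    · rintro ⟨u, hu, hq⟩
      obtain ⟨a, ha, h⟩ := cp_mk_eq_iff.mp hq
      have ha0 : a ≠ 0 := fun h0 => by rw [h0] at ha; simp at ha
      refine ⟨⟨a⁻¹, by simp [map_inv₀, ha]⟩, ?_⟩
      have : smulS ⟨a⁻¹, by simp [map_inv₀, ha]⟩ x = u := by
        apply Subtype.ext
        show a⁻¹ • (x : EuclideanSpace ℂ (Fin (n + 1))) = u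
        rw [h, smul_smul, inv_mul_cancel₀ ha0, one_smul]
      rwa [this]
    · rintro ⟨a, ha⟩
      have ha0 : (a : ℂ) ≠ 0 := fun h0 => by have := a.2; rw [h0] at this; simp at this
      refine ⟨smulS a x, ha, ?_⟩
      apply cp_mk_eq_iff.mpr
      exact ⟨(a : ℂ)⁻¹, by simp [map_inv₀, a.2], by
        show (x : EuclideanSpace ℂ (Fin (n + 1))) = (a : ℂ)⁻¹ • ((a : ℂ) • (x : EuclideanSpace ℂ (Fin (n + 1))))
        rw [smul_smul, inv_mul_cancel₀ ha0, one_smul]⟩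
  rw [key]
  exact isOpen_iUnion fun a => (continuous_smulS a).isOpen_preimage U hU

lemma isOpenMap_mk2 : IsOpenMap (Quot.mk (R2 n)) := by
  intro U hU
  rw [← (isQuotientMap_quot_mk (r := R2 n)).isOpen_preimage]
  have key : Quot.mk (R2 n) ⁻¹' (Quot.mk (R2 n) '' U) = U ∪ Prod.swap ⁻¹' U := by
    ext x
    simp only [Set.mem_preimage, Set.mem_image, Set.mem_union]
    constructor
    · rintro ⟨u, hu, hq⟩
      rcases sq_mk_eq_iff.mp hq with h | h
      · left; rwa [← h]
      · right
        have : Prod.swap x = u := by rw [h]; rfl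
        rwa [this]
    · rintro (hx | hx)
      · exact ⟨x, hx, rfl⟩
      · exact ⟨Prod.swap x, hx, Quot.sound (by simp [R2])⟩
  rw [key]
  exact hU.union (continuous_swap.isOpen_preimage U hU)

/-- The full sphere-level projection. -/
def F (n : ℕ) : CSphere n × CSphere n → SymSq n :=
  fun p => Quot.mk _ (Quot.mk _ p.1, Quot.mk _ p.2)

lemma continuous_F : Continuous (F n) :=
  continuous_quot_mk.comp
    (((continuous_quot_mk).comp continuous_fst).prodMk ((continuous_quot_mk).comp continuous_snd))

lemma isOpenMap_F : IsOpenMap (F n) := by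
  have : F n = (Quot.mk (R2 n)) ∘ (Prod.map (Quot.mk (R1 n)) (Quot.mk (R1 n))) := rfl
  rw [this]
  exact isOpenMap_mk2.comp (isOpenMap_mk1.prodMap isOpenMap_mk1)


/-- Sphere-level configuration space: pairs of unit vectors spanning distinct lines. -/
def DSet (n : ℕ) : Set (CSphere n × CSphere n) :=
  {p | ‖(inner ℂ (p.1 : EuclideanSpace ℂ (Fin (n + 1))) (p.2 : EuclideanSpace ℂ (Fin (n + 1))) : ℂ)‖ < 1}

lemma isOpen_DSet : IsOpen (DSet n) := by
  have hc : Continuous fun p : CSphere n × CSphere n =>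
      ‖(inner ℂ (p.1 : EuclideanSpace ℂ (Fin (n + 1))) (p.2 : EuclideanSpace ℂ (Fin (n + 1))) : ℂ)‖ :=
    (Continuous.inner (continuous_subtype_val.comp continuous_fst)
      (continuous_subtype_val.comp continuous_snd)).norm
  exact isOpen_lt hc continuous_const

lemma isOffDiag_F {p : CSphere n × CSphere n} (hp : p ∈ DSet n) : IsOffDiag (F n p) := by
  refine ⟨Quot.mk _ p.1, Quot.mk _ p.2, ?_, rfl⟩
  intro h
  have := (r1_iff_norm_inner p.1 p.2).mp (cp_mk_eq_iff.mp h)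
  have hp' := hp
  simp only [DSet, Set.mem_setOf_eq] at hp'
  rw [this] at hp'
  exact lt_irrefl 1 hp'

/-- The sphere-level parametrization of the configuration space. -/
def q (n : ℕ) : DSet n → ConfigSpace n := fun p => ⟨F n p.1, isOffDiag_F p.2⟩

lemma continuous_q : Continuous (q n) :=
  (continuous_F.comp continuous_subtype_val).subtype_mk _

lemma surjective_q : Function.Surjective (q n) := by
  rintro ⟨s, x, y, hxy, rfl⟩
  obtain ⟨u, hu⟩ := Quot.exists_rep x
  obtain ⟨v, hv⟩ := Quot.exists_rep y
  have hlt : ((u, v) : CSphere n × CSphere n) ∈ DSet n := by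
    refine lt_of_le_of_ne (inner_le_one u v) (fun h => hxy ?_)
    rw [← hu, ← hv]
    exact Quot.sound ((r1_iff_norm_inner u v).mpr h)
  refine ⟨⟨(u, v), hlt⟩, ?_⟩
  apply Subtype.ext
  show F n (u, v) = Quot.mk _ (x, y)
  rw [F, ← hu, ← hv]

lemma q_image (U : Set (DSet n)) :
    q n '' U = Subtype.val ⁻¹' (F n '' (Subtype.val '' U)) := by
  ext c
  simp only [Set.mem_image, Set.mem_preimage]
  constructor
  · rintro ⟨p, hp, rfl⟩
    exact ⟨p.1, ⟨p, hp, rfl⟩, rfl⟩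
  · rintro ⟨x, ⟨p, hp, rfl⟩, hx⟩
    refine ⟨p, hp, ?_⟩
    apply Subtype.ext
    exact hx

lemma isOpenMap_q : IsOpenMap (q n) := by
  intro U hU
  rw [q_image]
  refine Continuous.isOpen_preimage continuous_subtype_val _ ?_
  exact isOpenMap_F _ ((isOpen_DSet.isOpenMap_subtype_val) U hU)

lemma isQuotientMap_qI :
    Topology.IsQuotientMap (fun x : DSet n × I => (q n x.1, x.2)) := by
  have hopen : IsOpenMap (Prod.map (q n) (id : I → I)) :=
    isOpenMap_q.prodMap IsOpenMap.id
  have hcont : Continuous (Prod.map (q n) (id : I → I)) :=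
    (continuous_q.comp continuous_fst).prodMk continuous_snd
  have hsurj : Function.Surjective (Prod.map (q n) (id : I → I)) :=
    Function.Surjective.prodMap surjective_q Function.surjective_id
  exact hopen.isQuotientMap hcont hsurj


/-! ### The deformation at sphere level -/

/-- inner product of the two unit vectors -/
def aC (P : CSphere n × CSphere n) : ℂ :=
  inner ℂ (P.1 : EuclideanSpace ℂ (Fin (n + 1))) (P.2 : EuclideanSpace ℂ (Fin (n + 1)))

/-- the (time-dependent) Gram-Schmidt coefficient -/
def cR (P : CSphere n × CSphere n) (s : I) : ℝ :=
  (s : ℝ) * (1 + Real.sqrt (1 - ‖aC P‖ ^ 2))⁻¹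

def w1 (P : CSphere n × CSphere n) (s : I) : EuclideanSpace ℂ (Fin (n + 1)) :=
  (P.1 : EuclideanSpace ℂ (Fin (n + 1)))
    - (((cR P s : ℝ) : ℂ) * (starRingEnd ℂ) (aC P)) • (P.2 : EuclideanSpace ℂ (Fin (n + 1)))

def w2 (P : CSphere n × CSphere n) (s : I) : EuclideanSpace ℂ (Fin (n + 1)) :=
  (P.2 : EuclideanSpace ℂ (Fin (n + 1)))
    - (((cR P s : ℝ) : ℂ) * aC P) • (P.1 : EuclideanSpace ℂ (Fin (n + 1)))

lemma norm_aC_nonneg (P : CSphere n × CSphere n) : 0 ≤ ‖aC P‖ := norm_nonneg _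

lemma cR_nonneg (P : CSphere n × CSphere n) (s : I) : 0 ≤ cR P s := by
  apply mul_nonneg s.2.1
  apply inv_nonneg.mpr
  positivity

lemma cR_lt_one {P : CSphere n × CSphere n} (hp : ‖aC P‖ < 1) (s : I) : cR P s < 1 := by
  have h1 : 0 < Real.sqrt (1 - ‖aC P‖ ^ 2) := by
    apply Real.sqrt_pos.mpr
    nlinarith [norm_aC_nonneg P]
  have h2 : (1 + Real.sqrt (1 - ‖aC P‖ ^ 2))⁻¹ < 1 := by
    rw [inv_lt_one_iff₀]
    right; linarith
  calc cR P s ≤ 1 * (1 + Real.sqrt (1 - ‖aC P‖ ^ 2))⁻¹ := by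
        apply mul_le_mul_of_nonneg_right s.2.2
        apply inv_nonneg.mpr; positivity
    _ < 1 := by rwa [one_mul]

lemma cR_mul_lt_one {P : CSphere n × CSphere n} (hp : ‖aC P‖ < 1) (s : I) :
    cR P s * ‖aC P‖ < 1 := by
  calc cR P s * ‖aC P‖ ≤ cR P s * 1 := by
        apply mul_le_mul_of_nonneg_left hp.le (cR_nonneg P s)
    _ < 1 := by rw [mul_one]; exact cR_lt_one hp s

lemma key_real {t : ℝ} (h0 : 0 ≤ t) (h1 : t < 1) :
    1 - 2 * (1 + Real.sqrt (1 - t ^ 2))⁻¹ + ((1 + Real.sqrt (1 - t ^ 2))⁻¹) ^ 2 * t ^ 2 = 0 := by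
  have hnn : (0:ℝ) ≤ 1 - t ^ 2 := by nlinarith
  have hw2 : Real.sqrt (1 - t ^ 2) ^ 2 = 1 - t ^ 2 := Real.sq_sqrt hnn
  have hw0 : 0 ≤ Real.sqrt (1 - t ^ 2) := Real.sqrt_nonneg _
  have hwne : 1 + Real.sqrt (1 - t ^ 2) ≠ 0 := by positivity
  field_simp
  linear_combination hw2

lemma cR_one_eq (P : CSphere n × CSphere n) :
    cR P 1 = (1 + Real.sqrt (1 - ‖aC P‖ ^ 2))⁻¹ := by
  have h1 : ((1 : I) : ℝ) = 1 := rfl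
  simp only [cR, h1, one_mul]

lemma cR_one {P : CSphere n × CSphere n} (hp : ‖aC P‖ < 1) :
    1 - 2 * cR P 1 + (cR P 1) ^ 2 * ‖aC P‖ ^ 2 = 0 := by
  rw [cR_one_eq]
  exact key_real (norm_aC_nonneg P) hp

lemma inner_uu (P : CSphere n × CSphere n) :
    (inner ℂ (P.1 : EuclideanSpace ℂ (Fin (n + 1))) (P.1 : EuclideanSpace ℂ (Fin (n + 1))) : ℂ) = 1 := by
  rw [inner_self_eq_norm_sq_to_K, norm_val]; norm_num

lemma inner_vv (P : CSphere n × CSphere n) :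
    (inner ℂ (P.2 : EuclideanSpace ℂ (Fin (n + 1))) (P.2 : EuclideanSpace ℂ (Fin (n + 1))) : ℂ) = 1 := by
  rw [inner_self_eq_norm_sq_to_K, norm_val]; norm_num

lemma aC_mul_conj (P : CSphere n × CSphere n) :
    aC P * (starRingEnd ℂ) (aC P) = ((‖aC P‖ ^ 2 : ℝ) : ℂ) := by
  rw [Complex.mul_conj]
  norm_cast
  rw [Complex.normSq_eq_norm_sq]

lemma inner_w1_w2 (P : CSphere n × CSphere n) (s : I) :
    (inner ℂ (w1 P s) (w2 P s) : ℂ)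
      = aC P * (1 - 2 * ((cR P s : ℝ) : ℂ) + ((cR P s : ℝ) : ℂ) ^ 2 * ((‖aC P‖ ^ 2 : ℝ) : ℂ)) := by
  have hvu : (inner ℂ (P.2 : EuclideanSpace ℂ (Fin (n + 1))) (P.1 : EuclideanSpace ℂ (Fin (n + 1))) : ℂ)
      = (starRingEnd ℂ) (aC P) := by
    rw [← inner_conj_symm]; rfl
  simp only [w1, w2, inner_sub_left, inner_sub_right, inner_smul_left, inner_smul_right,
    inner_uu, inner_vv, hvu, map_mul, Complex.conj_conj, Complex.conj_ofReal]
  have := aC_mul_conj P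
  have ha : (inner ℂ (P.1 : EuclideanSpace ℂ (Fin (n + 1))) (P.2 : EuclideanSpace ℂ (Fin (n + 1))) : ℂ)
      = aC P := rfl
  rw [ha]
  linear_combination (((cR P s : ℝ) : ℂ) ^ 2 * aC P) * this


lemma not_parallel {P : CSphere n × CSphere n} (hp : P ∈ DSet n) (z : ℂ) :
    (P.2 : EuclideanSpace ℂ (Fin (n + 1))) ≠ z • (P.1 : EuclideanSpace ℂ (Fin (n + 1))) := by
  intro h
  have ha : aC P = z := by
    rw [aC, h, inner_smul_right, inner_uu, mul_one]
  have hz : ‖z‖ = 1 := by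
    have := norm_val P.2
    rw [h, norm_smul, norm_val P.1, mul_one] at this
    exact this
  simp only [DSet, Set.mem_setOf_eq] at hp
  rw [show (inner ℂ (P.1 : EuclideanSpace ℂ (Fin (n + 1))) (P.2 : EuclideanSpace ℂ (Fin (n + 1))) : ℂ) = aC P from rfl,
    ha, hz] at hp
  exact lt_irrefl 1 hp

lemma w1_ne_zero {P : CSphere n × CSphere n} (hp : P ∈ DSet n) (s : I) : w1 P s ≠ 0 := by
  intro h
  rw [w1, sub_eq_zero] at h
  have ha : aC P = ((cR P s : ℝ) : ℂ) * aC P := by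
    conv_lhs => rw [aC, h, inner_smul_left, inner_vv, mul_one]
    rw [map_mul, Complex.conj_conj, Complex.conj_ofReal]
  by_cases h0 : aC P = 0
  · rw [h0] at h
    simp at h
    exact val_ne_zero P.1 h
  · have hc1 : ((cR P s : ℝ) : ℂ) = 1 :=
      mul_right_cancel₀ h0 (by rw [one_mul, ← ha])
    have : cR P s = 1 := Complex.ofReal_eq_one.mp hc1
    have := cR_lt_one hp s
    linarith
lemma w2_ne_zero {P : CSphere n × CSphere n} (hp : P ∈ DSet n) (s : I) : w2 P s ≠ 0 := by
  intro h
  rw [w2, sub_eq_zero] at h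
  have ha : aC P = ((cR P s : ℝ) : ℂ) * aC P := by
    conv_lhs => rw [aC, h, inner_smul_right, inner_uu, mul_one]
  by_cases h0 : aC P = 0
  · rw [h0] at h
    simp at h
    exact val_ne_zero P.2 h
  · have hc1 : ((cR P s : ℝ) : ℂ) = 1 :=
      mul_right_cancel₀ h0 (by rw [one_mul, ← ha])
    have : cR P s = 1 := Complex.ofReal_eq_one.mp hc1
    have := cR_lt_one hp s
    linarith

lemma w2_ne_smul_w1 {P : CSphere n × CSphere n} (hp : P ∈ DSet n) (s : I) (z : ℂ) :
    w2 P s ≠ z • w1 P s := by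
  intro h
  set x := ((cR P s : ℝ) : ℂ) * (starRingEnd ℂ) (aC P) with hx
  set y := ((cR P s : ℝ) : ℂ) * aC P with hy
  have h0 : w2 P s - z • w1 P s = 0 := sub_eq_zero.mpr h
  rw [w1, w2, ← hx, ← hy] at h0
  have h2 : (1 + z * x) • (P.2 : EuclideanSpace ℂ (Fin (n + 1)))
      - (z + y) • (P.1 : EuclideanSpace ℂ (Fin (n + 1))) = 0 := by
    have hm : (1 + z * x) • (P.2 : EuclideanSpace ℂ (Fin (n + 1)))
        - (z + y) • (P.1 : EuclideanSpace ℂ (Fin (n + 1)))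
        = ((P.2 : EuclideanSpace ℂ (Fin (n + 1))) - y • (P.1 : EuclideanSpace ℂ (Fin (n + 1))))
          - z • ((P.1 : EuclideanSpace ℂ (Fin (n + 1))) - x • (P.2 : EuclideanSpace ℂ (Fin (n + 1)))) := by
      module
    rw [hm]
    exact h0
  by_cases hz : 1 + z * x = 0
  · rw [hz, zero_smul, zero_sub, neg_eq_zero, smul_eq_zero] at h2
    rcases h2 with h2 | h2
    · have hzy : z = -y := by linear_combination h2
      rw [hzy] at hz
      have hyx : y * x = 1 := by linear_combination -hz
      have : ‖y * x‖ = 1 := by rw [hyx, norm_one]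
      rw [norm_mul, hy, hx, norm_mul, norm_mul, Complex.norm_real, RCLike.norm_conj] at this
      have hcn := cR_nonneg P s
      have habs : |cR P s| = cR P s := abs_of_nonneg hcn
      rw [Real.norm_eq_abs, habs] at this
      have hlt := cR_mul_lt_one hp s
      nlinarith [mul_nonneg hcn (norm_aC_nonneg P)]
    · exact val_ne_zero P.1 h2
  · have : (P.2 : EuclideanSpace ℂ (Fin (n + 1)))
        = ((1 + z * x)⁻¹ * (z + y)) • (P.1 : EuclideanSpace ℂ (Fin (n + 1))) := by
      rw [sub_eq_zero] at h2
      rw [← smul_smul, ← h2, smul_smul, inv_mul_cancel₀ hz, one_smul]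
    exact not_parallel hp _ this

/-- normalization map to the unit sphere -/
def normC (x : EuclideanSpace ℂ (Fin (n + 1))) (hx : x ≠ 0) : CSphere n :=
  ⟨((‖x‖ : ℝ) : ℂ)⁻¹ • x, by
    rw [mem_sphere_zero_iff_norm, norm_smul, norm_inv, Complex.norm_real, Real.norm_eq_abs,
      abs_of_nonneg (norm_nonneg x), inv_mul_cancel₀ (norm_ne_zero_iff.mpr hx)]⟩

lemma normC_val (x : EuclideanSpace ℂ (Fin (n + 1))) (hx : x ≠ 0) :
    (normC x hx : EuclideanSpace ℂ (Fin (n + 1))) = ((‖x‖ : ℝ) : ℂ)⁻¹ • x := rfl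

lemma inner_normC (x y : EuclideanSpace ℂ (Fin (n + 1))) (hx : x ≠ 0) (hy : y ≠ 0) :
    (inner ℂ (normC x hx : EuclideanSpace ℂ (Fin (n + 1))) (normC y hy : EuclideanSpace ℂ (Fin (n + 1))) : ℂ)
      = ((‖x‖ : ℝ) : ℂ)⁻¹ * ((‖y‖ : ℝ) : ℂ)⁻¹ * inner ℂ x y := by
  rw [normC_val, normC_val, inner_smul_left, inner_smul_right, map_inv₀, Complex.conj_ofReal]
  ring

lemma phi_mem_DSet {P : CSphere n × CSphere n} (hp : P ∈ DSet n) (s : I) :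
    ((normC (w1 P s) (w1_ne_zero hp s), normC (w2 P s) (w2_ne_zero hp s)) :
      CSphere n × CSphere n) ∈ DSet n := by
  set W1 := normC (w1 P s) (w1_ne_zero hp s)
  set W2 := normC (w2 P s) (w2_ne_zero hp s)
  refine lt_of_le_of_ne (inner_le_one W1 W2) ?_
  intro heq
  have h1 : ‖(inner ℂ (W1 : EuclideanSpace ℂ (Fin (n + 1))) (W2 : EuclideanSpace ℂ (Fin (n + 1))) : ℂ)‖
      = ‖(W1 : EuclideanSpace ℂ (Fin (n + 1)))‖ * ‖(W2 : EuclideanSpace ℂ (Fin (n + 1)))‖ := by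
    rw [norm_val, norm_val, one_mul]; exact heq
  obtain ⟨r, hr0, hr⟩ := norm_inner_eq_norm_iff (val_ne_zero W1) (val_ne_zero W2) |>.mp h1
  have hw2ne : ((‖w2 P s‖ : ℝ) : ℂ) ≠ 0 :=
    Complex.ofReal_ne_zero.mpr (norm_ne_zero_iff.mpr (w2_ne_zero hp s))
  have : w2 P s = (((‖w2 P s‖ : ℝ) : ℂ) * (r * ((‖w1 P s‖ : ℝ) : ℂ)⁻¹)) • w1 P s := by
    have := hr
    rw [normC_val, normC_val] at this
    calc w2 P s = ((‖w2 P s‖ : ℝ) : ℂ) • (((‖w2 P s‖ : ℝ) : ℂ)⁻¹ • w2 P s) := by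
          rw [smul_smul, mul_inv_cancel₀ hw2ne, one_smul]
      _ = ((‖w2 P s‖ : ℝ) : ℂ) • (r • (((‖w1 P s‖ : ℝ) : ℂ)⁻¹ • w1 P s)) := by rw [this]
      _ = _ := by rw [smul_smul, smul_smul, mul_assoc]
  exact w2_ne_smul_w1 hp s _ this

/-- The sphere-level deformation. -/
def Phi (n : ℕ) : DSet n × I → DSet n := fun x =>
  ⟨(normC (w1 x.1.1 x.2) (w1_ne_zero x.1.2 x.2), normC (w2 x.1.1 x.2) (w2_ne_zero x.1.2 x.2)),
    phi_mem_DSet x.1.2 x.2⟩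


lemma continuous_Phi : Continuous (Phi n) := by
  have cu : Continuous fun x : DSet n × I =>
      ((x.1 : CSphere n × CSphere n).1 : EuclideanSpace ℂ (Fin (n + 1))) :=
    continuous_subtype_val.comp (continuous_fst.comp (continuous_subtype_val.comp continuous_fst))
  have cv : Continuous fun x : DSet n × I =>
      ((x.1 : CSphere n × CSphere n).2 : EuclideanSpace ℂ (Fin (n + 1))) :=
    continuous_subtype_val.comp (continuous_snd.comp (continuous_subtype_val.comp continuous_fst))
  have ca : Continuous fun x : DSet n × I => aC x.1.1 := Continuous.inner cu cv
  have ccR : Continuous fun x : DSet n × I => cR x.1.1 x.2 := by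
    apply Continuous.mul (continuous_subtype_val.comp continuous_snd)
    apply Continuous.inv₀
    · exact Continuous.add continuous_const
        (Real.continuous_sqrt.comp (continuous_const.sub ((ca.norm).pow 2)))
    · intro x
      have := Real.sqrt_nonneg (1 - ‖aC x.1.1‖ ^ 2)
      positivity
  have cconj : Continuous fun x : DSet n × I => (starRingEnd ℂ) (aC x.1.1) := by
    exact Complex.continuous_conj.comp ca
  have cw1 : Continuous fun x : DSet n × I => w1 x.1.1 x.2 :=
    cu.sub (Continuous.smul ((Complex.continuous_ofReal.comp ccR).mul cconj) cv)
  have cw2 : Continuous fun x : DSet n × I => w2 x.1.1 x.2 :=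
    cv.sub (Continuous.smul ((Complex.continuous_ofReal.comp ccR).mul ca) cu)
  have cn1 : Continuous fun x : DSet n × I => ((‖w1 x.1.1 x.2‖ : ℝ) : ℂ)⁻¹ :=
    (Complex.continuous_ofReal.comp cw1.norm).inv₀
      (fun x => Complex.ofReal_ne_zero.mpr (norm_ne_zero_iff.mpr (w1_ne_zero x.1.2 x.2)))
  have cn2 : Continuous fun x : DSet n × I => ((‖w2 x.1.1 x.2‖ : ℝ) : ℂ)⁻¹ :=
    (Complex.continuous_ofReal.comp cw2.norm).inv₀
      (fun x => Complex.ofReal_ne_zero.mpr (norm_ne_zero_iff.mpr (w2_ne_zero x.1.2 x.2)))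
  apply Continuous.subtype_mk
  apply Continuous.prodMk
  · exact Continuous.subtype_mk (cn1.smul cw1) _
  · exact Continuous.subtype_mk (cn2.smul cw2) _

lemma cR_zero (P : CSphere n × CSphere n) : cR P 0 = 0 := by
  have h0 : ((0 : I) : ℝ) = 0 := rfl
  simp [cR, h0]

lemma Phi_fix {x : DSet n} {s : I} (h1 : w1 x.1 s = (x.1.1 : EuclideanSpace ℂ (Fin (n + 1))))
    (h2 : w2 x.1 s = (x.1.2 : EuclideanSpace ℂ (Fin (n + 1)))) : Phi n (x, s) = x := by
  apply Subtype.ext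
  apply Prod.ext <;> apply Subtype.ext
  · show ((‖w1 x.1 s‖ : ℝ) : ℂ)⁻¹ • w1 x.1 s = _
    rw [h1, norm_val]
    norm_num
  · show ((‖w2 x.1 s‖ : ℝ) : ℂ)⁻¹ • w2 x.1 s = _
    rw [h2, norm_val]
    norm_num

lemma Phi_zero (x : DSet n) : Phi n (x, 0) = x := by
  apply Phi_fix <;> simp [w1, w2, cR_zero]

lemma Phi_orth (x : DSet n) (h : aC x.1 = 0) (s : I) : Phi n (x, s) = x := by
  apply Phi_fix <;> simp [w1, w2, h]

lemma inner_Phi_one (x : DSet n) :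
    (inner ℂ (((Phi n (x, 1)).1.1 : CSphere n) : EuclideanSpace ℂ (Fin (n + 1)))
      (((Phi n (x, 1)).1.2 : CSphere n) : EuclideanSpace ℂ (Fin (n + 1))) : ℂ) = 0 := by
  show (inner ℂ ((normC (w1 x.1 1) (w1_ne_zero x.2 1)) : EuclideanSpace ℂ (Fin (n + 1)))
    ((normC (w2 x.1 1) (w2_ne_zero x.2 1)) : EuclideanSpace ℂ (Fin (n + 1))) : ℂ) = 0
  rw [inner_normC, inner_w1_w2]
  have hr : (1 - 2 * ((cR x.1 1 : ℝ) : ℂ) + ((cR x.1 1 : ℝ) : ℂ) ^ 2 * ((‖aC x.1‖ ^ 2 : ℝ) : ℂ))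
      = (((1 - 2 * cR x.1 1 + (cR x.1 1) ^ 2 * ‖aC x.1‖ ^ 2 : ℝ)) : ℂ) := by
    push_cast
    ring
  rw [hr, cR_one x.2]
  simp

/-! ### Equivariance -/

lemma aC_phase {P P' : CSphere n × CSphere n} {l m : ℂ}
    (h1 : (P'.1 : EuclideanSpace ℂ (Fin (n + 1))) = l • (P.1 : EuclideanSpace ℂ (Fin (n + 1))))
    (h2 : (P'.2 : EuclideanSpace ℂ (Fin (n + 1))) = m • (P.2 : EuclideanSpace ℂ (Fin (n + 1)))) :
    aC P' = (starRingEnd ℂ) l * m * aC P := by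
  rw [aC, h1, h2, inner_smul_left, inner_smul_right, aC]
  ring

lemma norm_aC_phase {P P' : CSphere n × CSphere n} {l m : ℂ}
    (hl : ‖l‖ = 1) (hm : ‖m‖ = 1)
    (h1 : (P'.1 : EuclideanSpace ℂ (Fin (n + 1))) = l • (P.1 : EuclideanSpace ℂ (Fin (n + 1))))
    (h2 : (P'.2 : EuclideanSpace ℂ (Fin (n + 1))) = m • (P.2 : EuclideanSpace ℂ (Fin (n + 1)))) :
    ‖aC P'‖ = ‖aC P‖ := by
  rw [aC_phase h1 h2, norm_mul, norm_mul, RCLike.norm_conj,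
    hl, hm]
  ring

lemma cR_phase {P P' : CSphere n × CSphere n} {l m : ℂ}
    (hl : ‖l‖ = 1) (hm : ‖m‖ = 1)
    (h1 : (P'.1 : EuclideanSpace ℂ (Fin (n + 1))) = l • (P.1 : EuclideanSpace ℂ (Fin (n + 1))))
    (h2 : (P'.2 : EuclideanSpace ℂ (Fin (n + 1))) = m • (P.2 : EuclideanSpace ℂ (Fin (n + 1))))
    (s : I) : cR P' s = cR P s := by
  rw [cR, cR, norm_aC_phase hl hm h1 h2]

lemma conj_mul_self_of_abs {m : ℂ} (hm : ‖m‖ = 1) : (starRingEnd ℂ) m * m = 1 := by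
  rw [Complex.conj_mul']
  norm_cast
  rw [hm]
  norm_num

lemma w1_phase {P P' : CSphere n × CSphere n} {l m : ℂ}
    (hl : ‖l‖ = 1) (hm : ‖m‖ = 1)
    (h1 : (P'.1 : EuclideanSpace ℂ (Fin (n + 1))) = l • (P.1 : EuclideanSpace ℂ (Fin (n + 1))))
    (h2 : (P'.2 : EuclideanSpace ℂ (Fin (n + 1))) = m • (P.2 : EuclideanSpace ℂ (Fin (n + 1))))
    (s : I) : w1 P' s = l • w1 P s := by
  have hs : ((cR P' s : ℝ) : ℂ) * (starRingEnd ℂ) (aC P') * m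
      = l * (((cR P s : ℝ) : ℂ) * (starRingEnd ℂ) (aC P)) := by
    rw [cR_phase hl hm h1 h2, aC_phase h1 h2]
    simp only [map_mul, Complex.conj_conj]
    linear_combination (((cR P s : ℝ) : ℂ) * l * (starRingEnd ℂ) (aC P)) * conj_mul_self_of_abs hm
  rw [w1, w1, h1, h2, smul_smul, hs, smul_sub, ← smul_smul]

lemma w2_phase {P P' : CSphere n × CSphere n} {l m : ℂ}
    (hl : ‖l‖ = 1) (hm : ‖m‖ = 1)
    (h1 : (P'.1 : EuclideanSpace ℂ (Fin (n + 1))) = l • (P.1 : EuclideanSpace ℂ (Fin (n + 1))))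
    (h2 : (P'.2 : EuclideanSpace ℂ (Fin (n + 1))) = m • (P.2 : EuclideanSpace ℂ (Fin (n + 1))))
    (s : I) : w2 P' s = m • w2 P s := by
  have hs : ((cR P' s : ℝ) : ℂ) * aC P' * l
      = m * (((cR P s : ℝ) : ℂ) * aC P) := by
    rw [cR_phase hl hm h1 h2, aC_phase h1 h2]
    linear_combination (((cR P s : ℝ) : ℂ) * m * aC P) * conj_mul_self_of_abs hl
  rw [w2, w2, h1, h2, smul_smul, hs, smul_sub, ← smul_smul]

lemma aC_swap (P : CSphere n × CSphere n) :
    aC (P.2, P.1) = (starRingEnd ℂ) (aC P) := by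
  rw [aC, aC, ← inner_conj_symm]

lemma cR_swap (P : CSphere n × CSphere n) (s : I) : cR (P.2, P.1) s = cR P s := by
  rw [cR, cR, aC_swap, RCLike.norm_conj]

lemma w1_swap (P : CSphere n × CSphere n) (s : I) : w1 (P.2, P.1) s = w2 P s := by
  rw [w1, w2, cR_swap, aC_swap, Complex.conj_conj]

lemma w2_swap (P : CSphere n × CSphere n) (s : I) : w2 (P.2, P.1) s = w1 P s := by
  rw [w2, w1, cR_swap, aC_swap]

/-- normalization commutes with unit scalars at the level of `CP`. -/
lemma mk_normC_smul {x y : EuclideanSpace ℂ (Fin (n + 1))} {l : ℂ} (hl : ‖l‖ = 1)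
    (hx : x ≠ 0) (hy : y ≠ 0) (h : y = l • x) :
    Quot.mk (R1 n) (normC x hx) = Quot.mk (R1 n) (normC y hy) := by
  apply (cp_mk_eq_iff).mpr
  refine ⟨l, hl, ?_⟩
  rw [normC_val, normC_val, h, norm_smul, hl, one_mul, smul_comm]

/-! ### Descent to the configuration space -/

lemma F_Phi_descend {p p' : DSet n} (s : I) (h : q n p = q n p') :
    q n (Phi n (p, s)) = q n (Phi n (p', s)) := by
  have hF : F n p.1 = F n p'.1 := congrArg Subtype.val h
  apply Subtype.ext
  show F n (Phi n (p, s)).1 = F n (Phi n (p', s)).1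
  rcases sq_mk_eq_iff.mp hF with hc | hc
  · -- components match
    have e1 : Quot.mk (R1 n) (p.1).1 = Quot.mk (R1 n) (p'.1).1 := congrArg Prod.fst hc
    have e2 : Quot.mk (R1 n) (p.1).2 = Quot.mk (R1 n) (p'.1).2 := congrArg Prod.snd hc
    obtain ⟨l, hl, hl'⟩ := cp_mk_eq_iff.mp e1
    obtain ⟨m, hm, hm'⟩ := cp_mk_eq_iff.mp e2
    have hw1 := w1_phase (P := p.1) (P' := p'.1) hl hm hl' hm' s
    have hw2 := w2_phase (P := p.1) (P' := p'.1) hl hm hl' hm' s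
    have m1 : Quot.mk (R1 n) (normC (w1 p.1 s) (w1_ne_zero p.2 s))
        = Quot.mk (R1 n) (normC (w1 p'.1 s) (w1_ne_zero p'.2 s)) :=
      mk_normC_smul hl (w1_ne_zero p.2 s) (w1_ne_zero p'.2 s) hw1
    have m2 : Quot.mk (R1 n) (normC (w2 p.1 s) (w2_ne_zero p.2 s))
        = Quot.mk (R1 n) (normC (w2 p'.1 s) (w2_ne_zero p'.2 s)) :=
      mk_normC_smul hm (w2_ne_zero p.2 s) (w2_ne_zero p'.2 s) hw2
    show Quot.mk (R2 n) (Quot.mk (R1 n) (normC (w1 p.1 s) (w1_ne_zero p.2 s)),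
        Quot.mk (R1 n) (normC (w2 p.1 s) (w2_ne_zero p.2 s)))
      = Quot.mk (R2 n) (Quot.mk (R1 n) (normC (w1 p'.1 s) (w1_ne_zero p'.2 s)),
        Quot.mk (R1 n) (normC (w2 p'.1 s) (w2_ne_zero p'.2 s)))
    rw [m1, m2]
  · -- components match after a swap
    have e1 : Quot.mk (R1 n) (p'.1).1 = Quot.mk (R1 n) (p.1).2 := congrArg Prod.fst hc
    have e2 : Quot.mk (R1 n) (p'.1).2 = Quot.mk (R1 n) (p.1).1 := congrArg Prod.snd hc
    obtain ⟨l, hl, hl'⟩ := cp_mk_eq_iff.mp e1.symm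
    obtain ⟨m, hm, hm'⟩ := cp_mk_eq_iff.mp e2.symm
    -- p'.1.val = l • p.2.val  and  p'.2.val = m • p.1.val
    have hw1 : w1 p'.1 s = l • w2 p.1 s := by
      rw [← w1_swap p.1 s]
      exact w1_phase (P := (p.1.2, p.1.1)) (P' := p'.1) hl hm hl' hm' s
    have hw2 : w2 p'.1 s = m • w1 p.1 s := by
      rw [← w2_swap p.1 s]
      exact w2_phase (P := (p.1.2, p.1.1)) (P' := p'.1) hl hm hl' hm' s
    have m1 : Quot.mk (R1 n) (normC (w2 p.1 s) (w2_ne_zero p.2 s))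
        = Quot.mk (R1 n) (normC (w1 p'.1 s) (w1_ne_zero p'.2 s)) :=
      mk_normC_smul hl (w2_ne_zero p.2 s) (w1_ne_zero p'.2 s) hw1
    have m2 : Quot.mk (R1 n) (normC (w1 p.1 s) (w1_ne_zero p.2 s))
        = Quot.mk (R1 n) (normC (w2 p'.1 s) (w2_ne_zero p'.2 s)) :=
      mk_normC_smul hm (w1_ne_zero p.2 s) (w2_ne_zero p'.2 s) hw2
    show Quot.mk (R2 n) (Quot.mk (R1 n) (normC (w1 p.1 s) (w1_ne_zero p.2 s)),
        Quot.mk (R1 n) (normC (w2 p.1 s) (w2_ne_zero p.2 s)))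
      = Quot.mk (R2 n) (Quot.mk (R1 n) (normC (w1 p'.1 s) (w1_ne_zero p'.2 s)),
        Quot.mk (R1 n) (normC (w2 p'.1 s) (w2_ne_zero p'.2 s)))
    calc Quot.mk (R2 n) (Quot.mk (R1 n) (normC (w1 p.1 s) (w1_ne_zero p.2 s)),
          Quot.mk (R1 n) (normC (w2 p.1 s) (w2_ne_zero p.2 s)))
        = Quot.mk (R2 n) (Quot.mk (R1 n) (normC (w2 p.1 s) (w2_ne_zero p.2 s)),
          Quot.mk (R1 n) (normC (w1 p.1 s) (w1_ne_zero p.2 s))) := Quot.sound rfl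
      _ = _ := by rw [m1, m2]

/-! ### The homotopy on the configuration space -/

def Hmap (n : ℕ) : ConfigSpace n × I → ConfigSpace n :=
  fun x => q n (Phi n ((surjective_q x.1).choose, x.2))

lemma Hmap_q (p : DSet n) (s : I) : Hmap n (q n p, s) = q n (Phi n (p, s)) :=
  F_Phi_descend s ((surjective_q (q n p)).choose_spec)

lemma continuous_Hmap : Continuous (Hmap n) := by
  rw [isQuotientMap_qI.continuous_iff]
  have heq : (Hmap n) ∘ (fun x : DSet n × I => (q n x.1, x.2)) = fun x => q n (Phi n x) := by
    funext x
    exact Hmap_q x.1 x.2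
  rw [heq]
  exact continuous_q.comp continuous_Phi

lemma Hmap_zero (c : ConfigSpace n) : Hmap n (c, 0) = c := by
  show q n (Phi n ((surjective_q c).choose, 0)) = c
  rw [Phi_zero]
  exact (surjective_q c).choose_spec

lemma aC_eq_zero_of_orth {p : DSet n} {c : ConfigSpace n} (hq : q n p = c)
    (h : IsOrthPair c.1) : aC p.1 = 0 := by
  obtain ⟨u, v, huv, hval⟩ := h
  have hF : F n p.1 = Quot.mk (R2 n) (Quot.mk (R1 n) u, Quot.mk (R1 n) v) := by
    have := congrArg Subtype.val hq
    rw [hval] at this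
    exact this
  rcases sq_mk_eq_iff.mp hF with hc | hc
  · have e1 : Quot.mk (R1 n) (p.1).1 = Quot.mk (R1 n) u := congrArg Prod.fst hc
    have e2 : Quot.mk (R1 n) (p.1).2 = Quot.mk (R1 n) v := congrArg Prod.snd hc
    obtain ⟨l, hl, hl'⟩ := cp_mk_eq_iff.mp e1
    obtain ⟨m, hm, hm'⟩ := cp_mk_eq_iff.mp e2
    have hphase := aC_phase (P := p.1) (P' := (u, v)) hl' hm'
    have h0 : aC ((u, v) : CSphere n × CSphere n) = 0 := huv
    rw [h0] at hphase
    have hl0 : (starRingEnd ℂ) l ≠ 0 := by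
      intro hz
      rw [show l = 0 by simpa using congrArg (starRingEnd ℂ) hz] at hl
      simp at hl
    have hm0 : m ≠ 0 := by
      intro hz; rw [hz] at hm; simp at hm
    have := hphase.symm
    rcases mul_eq_zero.mp this with h' | h'
    · rcases mul_eq_zero.mp h' with h'' | h''
      · exact absurd h'' hl0
      · exact absurd h'' hm0
    · exact h'
  · have e1 : Quot.mk (R1 n) u = Quot.mk (R1 n) (p.1).2 := congrArg Prod.fst hc
    have e2 : Quot.mk (R1 n) v = Quot.mk (R1 n) (p.1).1 := congrArg Prod.snd hc
    obtain ⟨l, hl, hl'⟩ := cp_mk_eq_iff.mp e1.symm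
    obtain ⟨m, hm, hm'⟩ := cp_mk_eq_iff.mp e2.symm
    have hphase := aC_phase (P := ((p.1).2, (p.1).1)) (P' := (u, v)) hl' hm'
    rw [aC_swap] at hphase
    have h0 : aC ((u, v) : CSphere n × CSphere n) = 0 := huv
    rw [h0] at hphase
    have hl0 : (starRingEnd ℂ) l ≠ 0 := by
      intro hz
      rw [show l = 0 by simpa using congrArg (starRingEnd ℂ) hz] at hl
      simp at hl
    have hm0 : m ≠ 0 := by
      intro hz; rw [hz] at hm; simp at hm
    have := hphase.symm
    rcases mul_eq_zero.mp this with h' | h'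
    · rcases mul_eq_zero.mp h' with h'' | h''
      · exact absurd h'' hl0
      · exact absurd h'' hm0
    · simpa using congrArg (starRingEnd ℂ) h'

lemma Hmap_one_fix {c : ConfigSpace n} (h : IsOrthPair c.1) : Hmap n (c, 1) = c := by
  show q n (Phi n ((surjective_q c).choose, 1)) = c
  rw [Phi_orth _ (aC_eq_zero_of_orth (surjective_q c).choose_spec h)]
  exact (surjective_q c).choose_spec

lemma isOrthPair_Hmap_one (c : ConfigSpace n) : IsOrthPair (Hmap n (c, 1)).1 :=
  ⟨(Phi n ((surjective_q c).choose, 1)).1.1, (Phi n ((surjective_q c).choose, 1)).1.2,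
    inner_Phi_one _, rfl⟩

end
end AntiDiagRetract

open AntiDiagRetract

/-- **`Γₙ` is a deformation retract of the configuration space `C` of unordered pairs of
distinct points of `ℂPⁿ`** : there is a continuous retraction `r : C → Γₙ` restricting to
the identity on `Γₙ`, such that the composite `C → Γₙ ↪ C` is homotopic to the identity.
In particular the inclusion `Γₙ ↪ C` is a homotopy equivalence. -/
theorem antiDiag_deformation_retract (n : ℕ) (hn : 1 ≤ n) :
    ∃ r : C(ConfigSpace n, AntiDiag n),
      (∀ g : AntiDiag n, r g.1 = g) ∧
      ((⟨Subtype.val, continuous_subtype_val⟩ : C(AntiDiag n, ConfigSpace n)).comp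
          r).Homotopic (ContinuousMap.id (ConfigSpace n)) := by

  classical
  refine ⟨⟨fun c => ⟨Hmap n (c, 1), isOrthPair_Hmap_one c⟩, ?_⟩, ?_, ?_⟩
  · exact Continuous.subtype_mk
      (continuous_Hmap.comp (continuous_id.prodMk continuous_const)) _
  · intro g
    apply Subtype.ext
    apply Subtype.ext
    show (Hmap n (g.1, 1)).1 = g.1.1
    rw [Hmap_one_fix g.2]
  · exact ⟨{
      toFun := fun x => Hmap n (x.2, unitInterval.symm x.1)
      continuous_toFun := continuous_Hmap.comp
        (continuous_snd.prodMk (unitInterval.continuous_symm.comp continuous_fst))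
      map_zero_left := fun c => by
        show Hmap n (c, unitInterval.symm 0) = _
        rw [unitInterval.symm_zero]
        rfl
      map_one_left := fun c => by
        show Hmap n (c, unitInterval.symm 1) = _
        rw [unitInterval.symm_one]
        exact Hmap_zero c }⟩
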